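/- arXiv:2509.15173 — 3 statements merged into one kernel-verified Lean document; each statement's English description precedes it below -/
import Mathlib

section
/- Let f : (0,∞) → (0,∞) be a Lebesgue-measurable function and suppose there exists a constant Γ ≥ 0 such that f(t₀) ≤ e^{Γ} f(t) whenever t₀ ≥ 1 and t₀ − 1 ≤ t ≤ t₀. If τ ∈ ℝ satisfies ∫₀^∞ e^{τ t} f(t) dt < ∞, then liminf_{t→∞} (−log f(t))/t ≥ τ. -/
/-!
Integrating the comparability hypothesis over the unit window `(t₀ - 1, t₀]`, on which
`e^{τ t}` is within a factor `e^{|τ|}` of `e^{τ t₀}`, gives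
`f t₀ ≤ e^{Γ + |τ|} (∫₀^∞ e^{τ t} f(t) dt) e^{-τ t₀}` for all `t₀ ≥ 1`.
Taking logarithms, `-log f(t) / t ≥ τ - K / t` for a constant `K`, and the right side tends to `τ`.
-/

open MeasureTheory Filter Set

theorem const_mul_measureReal_le_setIntegral {α : Type*} [MeasurableSpace α] {μ : Measure α}
    {g : α → ℝ} {s A : Set α} {c : ℝ} (hA : MeasurableSet A) (hμA : μ A ≠ ⊤) (hAs : A ⊆ s)
    (hg : IntegrableOn g s μ) (hg_nonneg : 0 ≤ᵐ[μ.restrict s] g) (hc : ∀ x ∈ A, c ≤ g x) :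
    c * μ.real A ≤ ∫ x in s, g x ∂μ :=
  calc c * μ.real A = μ.real A • c := by rw [smul_eq_mul, mul_comm]
    _ ≤ ∫ x in A, g x ∂μ := setIntegral_ge_of_const_le hA hμA hc (hg.mono_set hAs)
    _ ≤ ∫ x in s, g x ∂μ := setIntegral_mono_set hg hg_nonneg hAs.eventuallyLE

theorem mul_sub_abs_le_mul_of_abs_sub_le_one {τ t t₀ : ℝ} (h : |t₀ - t| ≤ 1) :
    τ * t₀ - |τ| ≤ τ * t := by
  have : τ * (t₀ - t) ≤ |τ| := by
    calc τ * (t₀ - t) ≤ |τ * (t₀ - t)| := le_abs_self _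
      _ = |τ| * |t₀ - t| := abs_mul _ _
      _ ≤ |τ| := mul_le_of_le_one_right (abs_nonneg τ) h
  linarith

theorem le_mul_exp_neg_of_unit_window_comparable {f : ℝ → ℝ} {Γ τ : ℝ}
    (hf_pos : ∀ t ∈ Ioi (0 : ℝ), 0 < f t)
    (hcomp : ∀ t₀ t : ℝ, 1 ≤ t₀ → t₀ - 1 ≤ t → t ≤ t₀ → f t₀ ≤ Real.exp Γ * f t)
    (hint : IntegrableOn (fun t => Real.exp (τ * t) * f t) (Ioi 0)) {t₀ : ℝ} (ht₀ : 1 ≤ t₀) :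
    f t₀ ≤ (Real.exp (Γ + |τ|) * ∫ t in Ioi 0, Real.exp (τ * t) * f t) * Real.exp (-(τ * t₀)) := by
  have hwindow : Ioc (t₀ - 1) t₀ ⊆ Ioi 0 := fun t ht => lt_of_le_of_lt (by linarith) ht.1
  have hlower : ∀ t ∈ Ioc (t₀ - 1) t₀,
      Real.exp (-Γ) * f t₀ * Real.exp (τ * t₀ - |τ|) ≤ Real.exp (τ * t) * f t := by
    intro t ⟨ht_gt, ht_le⟩
    have hf : Real.exp (-Γ) * f t₀ ≤ f t := by
      rw [Real.exp_neg, inv_mul_le_iff₀ (Real.exp_pos Γ)]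
      exact hcomp t₀ t ht₀ ht_gt.le ht_le
    have hexp : Real.exp (τ * t₀ - |τ|) ≤ Real.exp (τ * t) :=
      Real.exp_le_exp.2 (mul_sub_abs_le_mul_of_abs_sub_le_one
        (abs_le.2 ⟨by linarith, by linarith⟩))
    rw [mul_comm (Real.exp (τ * t))]
    exact mul_le_mul hf hexp (Real.exp_pos _).le (hf_pos t (hwindow ⟨ht_gt, ht_le⟩)).le
  have hnonneg : 0 ≤ᵐ[volume.restrict (Ioi 0)] fun t => Real.exp (τ * t) * f t :=
    ae_restrict_of_forall_mem measurableSet_Ioi fun t ht =>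
      (mul_pos (Real.exp_pos _) (hf_pos t ht)).le
  have hmain := const_mul_measureReal_le_setIntegral measurableSet_Ioc
    (by simp [Real.volume_Ioc]) hwindow hint hnonneg hlower
  rw [Real.volume_real_Ioc, sub_sub_cancel, max_eq_left zero_le_one, mul_one] at hmain
  calc f t₀ = f t₀ * Real.exp ((Γ + |τ|) + -Γ + (τ * t₀ - |τ|) + -(τ * t₀)) := by
        rw [show (Γ + |τ|) + -Γ + (τ * t₀ - |τ|) + -(τ * t₀) = 0 by ring, Real.exp_zero, mul_one]
    _ = Real.exp (Γ + |τ|) * (Real.exp (-Γ) * f t₀ * Real.exp (τ * t₀ - |τ|))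
        * Real.exp (-(τ * t₀)) := by
        simp only [Real.exp_add]
        ring
    _ ≤ _ := by gcongr

theorem le_liminf_neg_log_div_of_le_mul_exp_neg {f : ℝ → ℝ} {C τ : ℝ}
    (hf_pos : ∀ᶠ t in atTop, 0 < f t) (hle : ∀ᶠ t in atTop, f t ≤ C * Real.exp (-(τ * t))) :
    (τ : EReal) ≤ liminf (fun t : ℝ => ((-Real.log (f t) / t : ℝ) : EReal)) atTop := by
  obtain ⟨t₁, hpos₁, hle₁⟩ := (hf_pos.and hle).exists
  have hC : 0 < C := pos_of_mul_pos_left (hpos₁.trans_le hle₁) (Real.exp_pos _).le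
  have hlower : ∀ᶠ t in atTop, τ - Real.log C / t ≤ -Real.log (f t) / t := by
    filter_upwards [hf_pos, hle, eventually_gt_atTop 0] with t hft hft_le ht
    have hlog := Real.log_le_log hft hft_le
    rw [Real.log_mul hC.ne' (Real.exp_pos _).ne', Real.log_exp] at hlog
    rw [sub_div' ht.ne']
    gcongr
    linarith
  have htendsto :
      Tendsto (fun t : ℝ => ((τ - Real.log C / t : ℝ) : EReal)) atTop (nhds (τ : EReal)) := by
    rw [EReal.tendsto_coe]
    simpa using tendsto_const_nhds.sub
      ((tendsto_const_nhds (x := Real.log C)).div_atTop tendsto_id)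
  rw [← htendsto.liminf_eq]
  exact liminf_le_liminf (hlower.mono fun t ht => EReal.coe_le_coe_iff.2 ht)

theorem stmt1_general (f : ℝ → ℝ)
    (hf_pos : ∀ t ∈ Set.Ioi (0 : ℝ), 0 < f t)
    (Γ : ℝ)
    (hcomp : ∀ t₀ t : ℝ, 1 ≤ t₀ → t₀ - 1 ≤ t → t ≤ t₀ → f t₀ ≤ Real.exp Γ * f t)
    (τ : ℝ)
    (hint : MeasureTheory.IntegrableOn (fun t => Real.exp (τ * t) * f t) (Set.Ioi (0 : ℝ))) :
    (τ : EReal) ≤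
      Filter.liminf (fun t : ℝ => ((-Real.log (f t) / t : ℝ) : EReal)) Filter.atTop :=
  le_liminf_neg_log_div_of_le_mul_exp_neg
    ((eventually_gt_atTop 0).mono hf_pos)
    ((eventually_ge_atTop 1).mono fun _ ht₀ =>
      le_mul_exp_neg_of_unit_window_comparable hf_pos hcomp hint ht₀)

/-- Let `f : (0,∞) → (0,∞)` be Lebesgue-measurable, and suppose there is `Γ ≥ 0` with
`f t₀ ≤ e^Γ f t` whenever `t₀ ≥ 1` and `t₀ - 1 ≤ t ≤ t₀`.  If `τ ∈ ℝ` satisfies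
`∫₀^∞ e^{τ t} f(t) dt < ∞`, then `liminf_{t→∞} (-log f(t))/t ≥ τ`. -/
theorem stmt1 (f : ℝ → ℝ)
    (hf_meas : AEMeasurable f (volume.restrict (Set.Ioi (0 : ℝ))))
    (hf_pos : ∀ t ∈ Set.Ioi (0 : ℝ), 0 < f t)
    (Γ : ℝ) (hΓ : 0 ≤ Γ)
    (hcomp : ∀ t₀ t : ℝ, 1 ≤ t₀ → t₀ - 1 ≤ t → t ≤ t₀ → f t₀ ≤ Real.exp Γ * f t)
    (τ : ℝ)
    (hint : MeasureTheory.IntegrableOn (fun t => Real.exp (τ * t) * f t) (Set.Ioi (0 : ℝ))) :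
    (τ : EReal) ≤
      Filter.liminf (fun t : ℝ => ((-Real.log (f t) / t : ℝ) : EReal)) Filter.atTop :=
  stmt1_general f hf_pos Γ hcomp τ hint
end

section
/- Let (X, μ) be a finite measure space with μ(X) > 0 and let β > 0. Let u, v : [0,∞) × X → ℝ be jointly measurable functions such that: (a) there exists γ ≥ 0 with |u(t,x) − u(s,x)| ≤ γ|t − s| for all s, t ≥ 0 and all x ∈ X; (b) for each x ∈ X the function t ↦ v(t,x) is nonincreasing; (c) for every t ≥ 0 the function x ↦ e^{β(v(t,x) − u(t,x))} is μ-integrable. Set f(t) := ∫_X e^{β(v(t,x) − u(t,x))} dμ(x) ∈ (0,∞). Then, as elements of [−∞,+∞], liminf_{t→∞} (−(1/t) log f(t)) = sup{ τ ∈ ℝ : ∫₀^∞ e^{τ t} f(t) dt < ∞ } (with sup ∅ = −∞). -/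
/-!
Write `f t = ∫ exp (β (v t - u t)) dμ`. Monotonicity of `v` and the Lipschitz bound on `u`
give `f t ≤ exp (βγ (t - s)) f s` for `s ≤ t`, so `f` drops by at most a factor `exp (-βγ)`
over a unit interval. Hence if `exp (τ t) f t` is integrable, its integral over `(t - 1, t]`
bounds `exp (τ t) f t` up to a constant, and `-(log f t) / t ≥ τ - O(1/t)`. Conversely, if
`τ < τ' < liminf -(log f t) / t`, then eventually `exp (τ t) f t ≤ exp (-(τ' - τ) t)`, while
on bounded intervals the same growth bound dominates `f` by an exponential.
-/

open MeasureTheory Filter Set Real Topology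

lemma EReal.sSup_coe_image_eq {S : Set ℝ} {L : EReal} (hle : ∀ τ ∈ S, (τ : EReal) ≤ L)
    (hmem : ∀ τ : ℝ, (τ : EReal) < L → τ ∈ S) :
    sSup ((fun τ : ℝ => (τ : EReal)) '' S) = L := by
  refine le_antisymm (sSup_le (by rintro _ ⟨τ, hτ, rfl⟩; exact hle τ hτ)) ?_
  by_contra! h
  obtain ⟨τ, hlt, hτL⟩ := EReal.exists_between_coe_real h
  exact (le_sSup (mem_image_of_mem _ (hmem τ hτL))).not_gt hlt

section LiminfNegDiv

variable {g : ℝ → ℝ} {τ : ℝ}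

lemma coe_le_liminf_neg_div_of_eventually_le {K : ℝ} (h : ∀ᶠ t in atTop, g t ≤ K - τ * t) :
    (τ : EReal) ≤ liminf (fun t => ((-(1 / t) * g t : ℝ) : EReal)) atTop := by
  have hlim : Tendsto (fun t : ℝ => ((τ - K / t : ℝ) : EReal)) atTop (𝓝 τ) := by
    have hK : Tendsto (fun t : ℝ => K / t) atTop (𝓝 0) :=
      tendsto_const_nhds.div_atTop tendsto_id
    exact (continuous_coe_real_ereal.tendsto _).comp (by simpa using tendsto_const_nhds.sub hK)
  rw [← hlim.liminf_eq]
  refine liminf_le_liminf ?_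
  filter_upwards [h, eventually_gt_atTop 0] with t ht ht0
  rw [EReal.coe_le_coe_iff, show -(1 / t) * g t = -g t / t by ring,
    show τ - K / t = (τ * t - K) / t by field_simp]
  exact div_le_div_of_nonneg_right (by linarith) ht0.le

lemma eventually_lt_neg_mul_of_coe_lt_liminf_neg_div
    (h : (τ : EReal) < liminf (fun t => ((-(1 / t) * g t : ℝ) : EReal)) atTop) :
    ∀ᶠ t in atTop, g t < -τ * t := by
  filter_upwards [eventually_lt_of_lt_liminf h, eventually_gt_atTop 0] with t ht ht0
  rw [EReal.coe_lt_coe_iff, show -(1 / t) * g t = -g t / t by ring, lt_div_iff₀ ht0] at ht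
  linarith

end LiminfNegDiv

section GrowthBound

variable {f : ℝ → ℝ} {c : ℝ}

lemma antitoneOn_log_sub_mul_of_growth (hpos : ∀ t, 0 ≤ t → 0 < f t)
    (hgrowth : ∀ s t, 0 ≤ s → s ≤ t → f t ≤ exp (c * (t - s)) * f s) :
    AntitoneOn (fun t => log (f t) - c * t) (Ici 0) := by
  intro s hs t ht hst
  have h := log_le_log (hpos t ht) (hgrowth s t hs hst)
  rw [log_mul (exp_ne_zero _) (hpos s hs).ne', log_exp] at h
  dsimp only
  linarith

lemma aestronglyMeasurable_of_growth (hpos : ∀ t, 0 ≤ t → 0 < f t)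
    (hgrowth : ∀ s t, 0 ≤ s → s ≤ t → f t ≤ exp (c * (t - s)) * f s) :
    AEStronglyMeasurable f (volume.restrict (Ioi 0)) := by
  have hg : AEMeasurable (fun t => log (f t) - c * t) (volume.restrict (Ioi 0)) :=
    aemeasurable_restrict_of_antitoneOn measurableSet_Ioi
      ((antitoneOn_log_sub_mul_of_growth hpos hgrowth).mono Ioi_subset_Ici_self)
  refine (hg.add (measurable_id.const_mul c).aemeasurable).exp.aestronglyMeasurable.congr ?_
  filter_upwards [ae_restrict_mem measurableSet_Ioi] with t ht
  simp [exp_log (hpos t (le_of_lt ht))]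

lemma aestronglyMeasurable_exp_mul_of_growth (τ : ℝ) (hpos : ∀ t, 0 ≤ t → 0 < f t)
    (hgrowth : ∀ s t, 0 ≤ s → s ≤ t → f t ≤ exp (c * (t - s)) * f s) {s : Set ℝ}
    (hs : s ⊆ Ioi 0) :
    AEStronglyMeasurable (fun t => exp (τ * t) * f t) (volume.restrict s) :=
  ((by fun_prop : Continuous fun t => exp (τ * t)).aestronglyMeasurable.mul
    (aestronglyMeasurable_of_growth hpos hgrowth)).mono_measure (Measure.restrict_mono hs le_rfl)

lemma exp_neg_mul_le_of_growth (hc : 0 ≤ c) (hpos : ∀ t, 0 ≤ t → 0 < f t)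
    (hgrowth : ∀ s t, 0 ≤ s → s ≤ t → f t ≤ exp (c * (t - s)) * f s) {s t : ℝ} (hs : 0 ≤ s)
    (hst : s ≤ t) (hts : t ≤ s + 1) :
    exp (-c) * f t ≤ f s := by
  have hexp : c * (t - s) ≤ c := by nlinarith
  have hft : f t ≤ exp c * f s :=
    (hgrowth s t hs hst).trans (mul_le_mul_of_nonneg_right (exp_le_exp.2 hexp) (hpos s hs).le)
  calc exp (-c) * f t ≤ exp (-c) * (exp c * f s) := by gcongr
    _ = f s := by rw [← mul_assoc, ← exp_add, neg_add_cancel, exp_zero, one_mul]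

lemma exp_mul_le_integral_of_growth (hc : 0 ≤ c) (hpos : ∀ t, 0 ≤ t → 0 < f t)
    (hgrowth : ∀ s t, 0 ≤ s → s ≤ t → f t ≤ exp (c * (t - s)) * f s) {τ : ℝ}
    (hτ : IntegrableOn (fun t => exp (τ * t) * f t) (Ioi 0)) {t : ℝ} (ht : 1 ≤ t) :
    exp (τ * t - |τ| - c) * f t ≤ ∫ s in Ioi 0, exp (τ * s) * f s := by
  have hIoc : Ioc (t - 1) t ⊆ Ioi 0 := fun s hs => by
    simp only [mem_Ioc, mem_Ioi] at hs ⊢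
    linarith
  have hpointwise :
      ∀ s ∈ Ioc (t - 1) t, exp (τ * t - |τ| - c) * f t ≤ exp (τ * s) * f s := by
    rintro s ⟨hs₁, hs₂⟩
    have hτs : τ * t - |τ| ≤ τ * s := by
      have h : τ * (t - s) ≤ |τ| := (le_abs_self _).trans <| by
        rw [abs_mul]
        exact mul_le_of_le_one_right (abs_nonneg τ) (abs_le.2 ⟨by linarith, by linarith⟩)
      linarith
    calc exp (τ * t - |τ| - c) * f t = exp (τ * t - |τ|) * (exp (-c) * f t) := by
          rw [sub_eq_add_neg _ c, exp_add, mul_assoc]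
      _ ≤ exp (τ * s) * f s :=
          mul_le_mul (exp_le_exp.2 hτs)
            (exp_neg_mul_le_of_growth hc hpos hgrowth (by linarith) hs₂ (by linarith))
            (mul_nonneg (exp_pos _).le (hpos t (by linarith)).le) (exp_pos _).le
  calc exp (τ * t - |τ| - c) * f t ≤ ∫ s in Ioc (t - 1) t, exp (τ * s) * f s := by
        simpa using setIntegral_ge_of_const_le_real measurableSet_Ioc (by simp) hpointwise
          (hτ.mono_set hIoc)
    _ ≤ ∫ s in Ioi 0, exp (τ * s) * f s := by
        refine setIntegral_mono_set hτ ?_ hIoc.eventuallyLE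
        filter_upwards [ae_restrict_mem measurableSet_Ioi] with s hs
        exact mul_nonneg (exp_pos _).le (hpos s (le_of_lt hs)).le

lemma coe_le_liminf_of_integrableOn (hc : 0 ≤ c) (hpos : ∀ t, 0 ≤ t → 0 < f t)
    (hgrowth : ∀ s t, 0 ≤ s → s ≤ t → f t ≤ exp (c * (t - s)) * f s) {τ : ℝ}
    (hτ : IntegrableOn (fun t => exp (τ * t) * f t) (Ioi 0)) :
    (τ : EReal) ≤ liminf (fun t => ((-(1 / t) * log (f t) : ℝ) : EReal)) atTop := by
  set I := ∫ s in Ioi 0, exp (τ * s) * f s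
  refine coe_le_liminf_neg_div_of_eventually_le (K := log I + |τ| + c) ?_
  filter_upwards [eventually_ge_atTop 1] with t ht
  have hft := hpos t (by linarith)
  have hle := exp_mul_le_integral_of_growth hc hpos hgrowth hτ ht
  have hlog := log_le_log (by positivity) hle
  rw [log_mul (exp_ne_zero _) hft.ne', log_exp] at hlog
  linarith

lemma integrableOn_Ioc_of_growth (hpos : ∀ t, 0 ≤ t → 0 < f t)
    (hgrowth : ∀ s t, 0 ≤ s → s ≤ t → f t ≤ exp (c * (t - s)) * f s) (τ T : ℝ) :
    IntegrableOn (fun t => exp (τ * t) * f t) (Ioc 0 T) := by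
  refine Integrable.mono'
    (by fun_prop : Continuous fun t => f 0 * exp ((τ + c) * t)).integrableOn_Ioc
    (aestronglyMeasurable_exp_mul_of_growth τ hpos hgrowth Ioc_subset_Ioi_self) ?_
  filter_upwards [ae_restrict_mem measurableSet_Ioc] with t htT
  obtain ⟨ht, -⟩ := htT
  rw [norm_of_nonneg (mul_nonneg (exp_pos _).le (hpos t ht.le).le)]
  calc exp (τ * t) * f t ≤ exp (τ * t) * (exp (c * (t - 0)) * f 0) := by
        gcongr; exact hgrowth 0 t le_rfl ht.le
    _ = f 0 * exp ((τ + c) * t) := by rw [sub_zero, ← mul_assoc, ← exp_add]; ring_nf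

lemma integrableOn_of_coe_lt_liminf (hpos : ∀ t, 0 ≤ t → 0 < f t)
    (hgrowth : ∀ s t, 0 ≤ s → s ≤ t → f t ≤ exp (c * (t - s)) * f s) {τ : ℝ}
    (hτ : (τ : EReal) < liminf (fun t => ((-(1 / t) * log (f t) : ℝ) : EReal)) atTop) :
    IntegrableOn (fun t => exp (τ * t) * f t) (Ioi 0) := by
  obtain ⟨τ', hττ', hτ'⟩ := EReal.exists_between_coe_real hτ
  obtain ⟨T, hT⟩ := eventually_atTop.1
    ((eventually_lt_neg_mul_of_coe_lt_liminf_neg_div hτ').and (eventually_gt_atTop 0))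
  have hT0 : 0 < T := (hT T le_rfl).2
  rw [← Ioc_union_Ioi_eq_Ioi hT0.le]
  refine (integrableOn_Ioc_of_growth hpos hgrowth τ T).union ?_
  refine Integrable.mono' (exp_neg_integrableOn_Ioi T (sub_pos.2 (EReal.coe_lt_coe_iff.1 hττ')))
    (aestronglyMeasurable_exp_mul_of_growth τ hpos hgrowth (Ioi_subset_Ioi hT0.le)) ?_
  filter_upwards [ae_restrict_mem measurableSet_Ioi] with t ht
  obtain ⟨hlog, ht0⟩ := hT t ht.le
  rw [norm_of_nonneg (mul_nonneg (exp_pos _).le (hpos t ht0.le).le)]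
  calc exp (τ * t) * f t ≤ exp (τ * t) * exp (-τ' * t) := by
        gcongr; exact ((log_lt_iff_lt_exp (hpos t ht0.le)).1 hlog).le
    _ = exp (-(τ' - τ) * t) := by rw [← exp_add]; ring_nf

theorem liminf_neg_log_div_eq_sSup_integrableOn (hc : 0 ≤ c) (hpos : ∀ t, 0 ≤ t → 0 < f t)
    (hgrowth : ∀ s t, 0 ≤ s → s ≤ t → f t ≤ exp (c * (t - s)) * f s) :
    liminf (fun t => ((-(1 / t) * log (f t) : ℝ) : EReal)) atTop
      = sSup ((fun τ : ℝ => (τ : EReal)) ''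
          {τ : ℝ | IntegrableOn (fun t => exp (τ * t) * f t) (Ioi 0)}) :=
  (EReal.sSup_coe_image_eq (fun _ hτ => coe_le_liminf_of_integrableOn hc hpos hgrowth hτ)
    (fun _ hτ => integrableOn_of_coe_lt_liminf hpos hgrowth hτ)).symm

end GrowthBound

lemma integral_exp_mul_sub_le {X : Type*} [MeasurableSpace X] (μ : Measure X) {β γ s t : ℝ}
    (hβ : 0 ≤ β) {u v : ℝ → X → ℝ} (hu : ∀ x, u s x - u t x ≤ γ * (t - s))
    (hv : ∀ x, v t x ≤ v s x) (hint_s : Integrable (fun x => exp (β * (v s x - u s x))) μ)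
    (hint_t : Integrable (fun x => exp (β * (v t x - u t x))) μ) :
    ∫ x, exp (β * (v t x - u t x)) ∂μ
      ≤ exp (β * γ * (t - s)) * ∫ x, exp (β * (v s x - u s x)) ∂μ := by
  rw [← integral_const_mul]
  refine integral_mono hint_t (hint_s.const_mul _) fun x => ?_
  rw [← exp_add]
  gcongr
  nlinarith [hu x, hv x]

theorem stmt3_general {X : Type*} [MeasurableSpace X] (μ : MeasureTheory.Measure X)
    (hμ : 0 < μ Set.univ)
    (β : ℝ) (hβ : 0 < β)
    (u v : ℝ → X → ℝ)
    (γ : ℝ) (hγ : 0 ≤ γ)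
    (hLip : ∀ s t : ℝ, 0 ≤ s → 0 ≤ t → ∀ x : X, |u t x - u s x| ≤ γ * |t - s|)
    (hmono : ∀ x : X, ∀ s t : ℝ, 0 ≤ s → s ≤ t → v t x ≤ v s x)
    (hint : ∀ t : ℝ, 0 ≤ t →
      MeasureTheory.Integrable (fun x => Real.exp (β * (v t x - u t x))) μ) :
    Filter.liminf
        (fun t : ℝ =>
          ((-(1 / t) * Real.log (∫ x, Real.exp (β * (v t x - u t x)) ∂μ) : ℝ) : EReal))
        Filter.atTop
      = sSup ((fun τ : ℝ => (τ : EReal)) ''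
          {τ : ℝ | MeasureTheory.IntegrableOn
            (fun t => Real.exp (τ * t) * ∫ x, Real.exp (β * (v t x - u t x)) ∂μ)
            (Set.Ioi (0 : ℝ))}) := by
  have : NeZero μ := ⟨Measure.measure_univ_pos.1 hμ⟩
  refine liminf_neg_log_div_eq_sSup_integrableOn (mul_nonneg hβ.le hγ)
    (fun t ht => integral_exp_pos (hint t ht)) fun s t hs hst => ?_
  refine integral_exp_mul_sub_le μ hβ.le (fun x => ?_) (fun x => hmono x s t hs hst) (hint s hs)
    (hint t (hs.trans hst))
  have hx := hLip s t hs (hs.trans hst) x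
  rw [abs_of_nonneg (sub_nonneg.2 hst), abs_sub_comm] at hx
  exact (le_abs_self _).trans hx

/-- Measure-theoretic form of the slope/integrability-threshold formula.
`(X, μ)` is a finite measure space with `μ(X) > 0`, `β > 0`, and `u, v` are jointly
measurable on `[0,∞) × X` with `u` uniformly Lipschitz in `t`, `v` nonincreasing in `t`,
and `x ↦ exp(β (v t x - u t x))` integrable for each `t ≥ 0`.  Setting
`f t := ∫_X exp(β (v t x - u t x)) dμ`, one has, in `[-∞,∞]`,
`liminf_{t→∞} (-(1/t) log f(t)) = sup { τ ∈ ℝ : ∫₀^∞ e^{τ t} f(t) dt < ∞ }`. -/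
theorem stmt3 {X : Type*} [MeasurableSpace X] (μ : MeasureTheory.Measure X)
    [MeasureTheory.IsFiniteMeasure μ] (hμ : 0 < μ Set.univ)
    (β : ℝ) (hβ : 0 < β)
    (u v : ℝ → X → ℝ)
    (hu_meas : AEMeasurable (fun p : ℝ × X => u p.1 p.2)
      ((volume.restrict (Set.Ici (0 : ℝ))).prod μ))
    (hv_meas : AEMeasurable (fun p : ℝ × X => v p.1 p.2)
      ((volume.restrict (Set.Ici (0 : ℝ))).prod μ))
    (γ : ℝ) (hγ : 0 ≤ γ)
    (hLip : ∀ s t : ℝ, 0 ≤ s → 0 ≤ t → ∀ x : X, |u t x - u s x| ≤ γ * |t - s|)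
    (hmono : ∀ x : X, ∀ s t : ℝ, 0 ≤ s → s ≤ t → v t x ≤ v s x)
    (hint : ∀ t : ℝ, 0 ≤ t →
      MeasureTheory.Integrable (fun x => Real.exp (β * (v t x - u t x))) μ) :
    Filter.liminf
        (fun t : ℝ =>
          ((-(1 / t) * Real.log (∫ x, Real.exp (β * (v t x - u t x)) ∂μ) : ℝ) : EReal))
        Filter.atTop
      = sSup ((fun τ : ℝ => (τ : EReal)) ''
          {τ : ℝ | MeasureTheory.IntegrableOn
            (fun t => Real.exp (τ * t) * ∫ x, Real.exp (β * (v t x - u t x)) ∂μ)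
            (Set.Ioi (0 : ℝ))}) :=
  stmt3_general μ hμ β hβ u v γ hγ hLip hmono hint
end

section
/- Let (M, d) be a metric space with basepoint o ∈ M, C > 0, α ∈ (0,1], and F : M → ℝ satisfying |F(x) − F(y)| ≤ C ( d(x,y)^α · max(d(o,x), d(o,y))^{1−α} + d(x,y) ) for all x, y ∈ M. Let A > 0, let u : (0,∞) → M and, for each m ∈ ℕ, u_m : (0,∞) → M be curves with d(o, u(t)) ≤ A t and d(o, u_m(t)) ≤ A t for all t > 0 and all m. If limsup_{t→∞} d(u_m(t), u(t))/t → 0 as m → ∞, then liminf_{t→∞} F(u_m(t))/t → liminf_{t→∞} F(u(t))/t as m → ∞. -/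
open Filter Topology

/-!
Both curves stay in the ball of radius `A t` about `o`, so the Hölder estimate rescaled by `t`
bounds `|F (u_m t) / t - F (u t) / t|` by `C (s ^ α A ^ (1 - α) + s)` with
`s = d(u_m t, u t) / t`. This modulus vanishes as `s → 0`, so for large `m` the slopes of `u_m`
are eventually uniformly close to those of `u`. Taking `y = o` in the estimate shows that all
slopes are bounded, hence their `liminf`s are real and move by at most that uniform distance.
-/

namespace Filter

variable {ι : Type*} {l : Filter ι} {f g : ι → ℝ} {ε : ℝ}

lemma liminf_le_liminf_add_of_eventually_le [NeBot l]
    (hf : IsBoundedUnder (· ≥ ·) l f) (hg : IsBoundedUnder (· ≤ ·) l (fun x ↦ |g x|))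
    (hfg : ∀ᶠ x in l, f x ≤ g x + ε) :
    liminf f l ≤ liminf g l + ε := by
  obtain ⟨hg_le, hg_ge⟩ := isBoundedUnder_le_abs.1 hg
  rw [← liminf_add_const l g ε hg_le.isCoboundedUnder_ge hg_ge]
  exact liminf_le_liminf hfg hf
    (isBoundedUnder_le_add hg_le isBoundedUnder_const).isCoboundedUnder_ge

lemma abs_liminf_sub_liminf_le [NeBot l]
    (hf : IsBoundedUnder (· ≤ ·) l (fun x ↦ |f x|)) (hg : IsBoundedUnder (· ≤ ·) l (fun x ↦ |g x|))
    (hfg : ∀ᶠ x in l, |f x - g x| ≤ ε) :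
    |liminf f l - liminf g l| ≤ ε := by
  rw [abs_sub_le_iff, sub_le_iff_le_add', sub_le_iff_le_add']
  constructor
  · refine liminf_le_liminf_add_of_eventually_le (isBoundedUnder_le_abs.1 hf).2 hg ?_
    filter_upwards [hfg] with x hx using by linarith [(abs_le.1 hx).2]
  · refine liminf_le_liminf_add_of_eventually_le (isBoundedUnder_le_abs.1 hg).2 hf ?_
    filter_upwards [hfg] with x hx using by linarith [(abs_le.1 hx).1]

lemma tendsto_liminf_of_eventually_abs_sub_le [NeBot l] {fs : ℕ → ι → ℝ}
    (hfs : ∀ m, IsBoundedUnder (· ≤ ·) l (fun x ↦ |fs m x|))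
    (hf : IsBoundedUnder (· ≤ ·) l (fun x ↦ |f x|))
    (h : ∀ ε > 0, ∀ᶠ m in atTop, ∀ᶠ x in l, |fs m x - f x| ≤ ε) :
    Tendsto (fun m ↦ liminf (fs m) l) atTop (𝓝 (liminf f l)) := by
  refine Metric.tendsto_nhds.2 fun ε hε ↦ (h (ε / 2) (half_pos hε)).mono fun m hm ↦ ?_
  rw [Real.dist_eq]
  exact (abs_liminf_sub_liminf_le (hfs m) hf hm).trans_lt (half_lt_self hε)

lemma liminf_coe_ereal [NeBot l] (hf : IsBoundedUnder (· ≤ ·) l (fun x ↦ |f x|)) :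
    liminf (fun x ↦ (f x : EReal)) l = liminf f l := by
  obtain ⟨hf_le, hf_ge⟩ := isBoundedUnder_le_abs.1 hf
  exact (EReal.coe_strictMono.monotone.map_liminf_of_continuousAt f
    continuous_coe_real_ereal.continuousAt hf_le.isCoboundedUnder_ge hf_ge).symm

end Filter

def HolderEstimate {M : Type*} [PseudoMetricSpace M] (o : M) (C α : ℝ) (F : M → ℝ) : Prop :=
  ∀ x y : M, |F x - F y| ≤ C * (dist x y ^ α * (max (dist o x) (dist o y)) ^ (1 - α) + dist x y)

lemma isBoundedUnder_dist_div {M : Type*} [PseudoMetricSpace M] {o : M} {A : ℝ} {v w : ℝ → M}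
    (hv : ∀ t > 0, dist o (v t) ≤ A * t) (hw : ∀ t > 0, dist o (w t) ≤ A * t) :
    IsBoundedUnder (· ≤ ·) atTop (fun t ↦ dist (v t) (w t) / t) := by
  refine ⟨2 * A, eventually_map.2 ?_⟩
  filter_upwards [eventually_gt_atTop 0] with t ht
  rw [div_le_iff₀ ht]
  linarith [dist_triangle_left (v t) (w t) o, hv t ht, hw t ht]

lemma tendsto_mul_rpow_mul_add_nhds_zero {C α B : ℝ} (hα : 0 < α) :
    Tendsto (fun s : ℝ ↦ C * (s ^ α * B + s)) (𝓝 0) (𝓝 0) := by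
  have hcont : ContinuousAt (fun s : ℝ ↦ C * (s ^ α * B + s)) 0 :=
    ((Real.continuousAt_rpow_const 0 α (Or.inr hα.le)).mul_const B |>.add continuousAt_id).const_mul
      C
  simpa [Real.zero_rpow hα.ne'] using hcont.tendsto

namespace HolderEstimate

variable {M : Type*} [PseudoMetricSpace M] {o : M} {C α : ℝ} {F : M → ℝ}

lemma abs_le_abs_add (hF : HolderEstimate o C α F) (x : M) : |F x| ≤ |F o| + 2 * C * dist o x := by
  have h := hF x o
  rw [dist_self, max_eq_left dist_nonneg, dist_comm x o, ← Real.rpow_add' dist_nonneg (by simp),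
    add_sub_cancel, Real.rpow_one] at h
  linarith [abs_sub_abs_le_abs_sub (F x) (F o)]

lemma isBoundedUnder_abs_div (hF : HolderEstimate o C α F) (hC : 0 ≤ C) {A : ℝ} {v : ℝ → M}
    (hv : ∀ t > 0, dist o (v t) ≤ A * t) :
    IsBoundedUnder (· ≤ ·) atTop (fun t ↦ |F (v t) / t|) := by
  refine ⟨|F o| + 2 * C * A, eventually_map.2 ?_⟩
  filter_upwards [eventually_ge_atTop 1] with t ht
  have ht0 : 0 < t := one_pos.trans_le ht
  rw [abs_div, abs_of_pos ht0, div_le_iff₀ ht0]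
  calc |F (v t)| ≤ |F o| + 2 * C * (A * t) := by
        grw [abs_le_abs_add hF, hv t ht0]
    _ ≤ (|F o| + 2 * C * A) * t := by nlinarith [abs_nonneg (F o)]

lemma abs_div_sub_div_le (hF : HolderEstimate o C α F) (hC : 0 ≤ C) (hα : α ≤ 1) {A t : ℝ}
    (hA : 0 ≤ A) (ht : 0 < t) {x y : M} (hx : dist o x ≤ A * t) (hy : dist o y ≤ A * t) :
    |F x / t - F y / t| ≤ C * ((dist x y / t) ^ α * A ^ (1 - α) + dist x y / t) := by
  have hrescale : dist x y ^ α * (A * t) ^ (1 - α) = (dist x y / t) ^ α * A ^ (1 - α) * t := by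
    rw [Real.div_rpow dist_nonneg ht.le, Real.mul_rpow hA ht.le, Real.rpow_sub ht, Real.rpow_one]
    field_simp
  have hmax : max (dist o x) (dist o y) ^ (1 - α) ≤ (A * t) ^ (1 - α) :=
    Real.rpow_le_rpow (le_max_of_le_left dist_nonneg) (max_le hx hy) (by linarith)
  rw [← sub_div, abs_div, abs_of_pos ht, div_le_iff₀ ht]
  calc |F x - F y| ≤ C * (dist x y ^ α * (A * t) ^ (1 - α) + dist x y) := by
        grw [hF x y, hmax]
    _ = C * ((dist x y / t) ^ α * A ^ (1 - α) + dist x y / t) * t := by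
        rw [hrescale]; field_simp

end HolderEstimate

/-- Sequential-continuity form: if curves `u_m` converge to `u` in the chordal sense
(`limsup_{t→∞} d(u_m t, u t)/t → 0` as `m → ∞`), then for any `F` satisfying the
Hölder-type estimate, the radial slopes converge:
`liminf_{t→∞} F(u_m t)/t → liminf_{t→∞} F(u t)/t`. -/
theorem stmt5 {M : Type*} [MetricSpace M] (o : M) (C : ℝ) (hC : 0 < C)
    (α : ℝ) (hα0 : 0 < α) (hα1 : α ≤ 1)
    (F : M → ℝ)
    (hF : ∀ x y : M, |F x - F y| ≤
      C * (dist x y ^ α * (max (dist o x) (dist o y)) ^ (1 - α) + dist x y))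
    (A : ℝ) (hA : 0 < A)
    (u : ℝ → M) (useq : ℕ → ℝ → M)
    (hu : ∀ t : ℝ, 0 < t → dist o (u t) ≤ A * t)
    (huseq : ∀ m : ℕ, ∀ t : ℝ, 0 < t → dist o (useq m t) ≤ A * t)
    (hconv : Filter.Tendsto
      (fun m : ℕ => Filter.limsup (fun t : ℝ => dist (useq m t) (u t) / t) Filter.atTop)
      Filter.atTop (nhds 0)) :
    Filter.Tendsto
      (fun m : ℕ =>
        Filter.liminf (fun t : ℝ => ((F (useq m t) / t : ℝ) : EReal)) Filter.atTop)
      Filter.atTop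
      (nhds (Filter.liminf (fun t : ℝ => ((F (u t) / t : ℝ) : EReal)) Filter.atTop)) := by
  have hF' : HolderEstimate o C α F := hF
  have hbdd (v : ℝ → M) (hv : ∀ t > 0, dist o (v t) ≤ A * t) := hF'.isBoundedUnder_abs_div hC.le hv
  simp_rw [liminf_coe_ereal (hbdd _ (huseq _)), liminf_coe_ereal (hbdd u hu)]
  refine EReal.tendsto_coe.2 <| tendsto_liminf_of_eventually_abs_sub_le
    (fun m ↦ hbdd _ (huseq m)) (hbdd u hu) fun ε hε ↦ ?_
  obtain ⟨δ, hδ, hmod⟩ := Metric.eventually_nhds_iff.1 <|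
    (tendsto_mul_rpow_mul_add_nhds_zero (C := C) (B := A ^ (1 - α)) hα0).eventually
      (ge_mem_nhds hε)
  filter_upwards [hconv.eventually_lt_const hδ] with m hm
  filter_upwards [eventually_lt_of_limsup_lt hm (isBoundedUnder_dist_div (huseq m) hu),
    eventually_gt_atTop 0] with t hdist ht
  refine (hF'.abs_div_sub_div_le hC.le hα1 hA.le ht (huseq m t ht) (hu t ht)).trans (hmod ?_)
  rwa [Real.dist_eq, sub_zero, abs_of_nonneg (by positivity)]
end
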